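/- arXiv:2412.08610 — 6 statements merged into one kernel-verified Lean document; each statement's English description precedes it below -/
import Mathlib

section
/- If g : ℕ → ℝ is weakly decreasing with g(1) < g(0), then the function p ↦ E[g(X(n,p))], where X(n,p) is Binomial(n,p), is strictly decreasing in p on (0,1). -/
/-!
Conditioning on the first trial gives
`E g(X(n+1,p)) = (1 - p) E g(X(n,p)) + p E g(X(n,p) + 1)`; differentiating this recursion,
induction on `n` yields `d/dp E g(X(n+1,p)) = (n+1) E[Δg(X(n,p))]` with `Δg ℓ = g (ℓ+1) - g ℓ`.
For antitone `g` we have `Δg ≤ 0` and `Δg 0 < 0`, and `X(n,p) = 0` has positive probability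
when `p < 1`, so the derivative is negative on `(0, 1)`.
-/

open Finset

noncomputable def binExp (n : ℕ) (p : ℝ) (g : ℕ → ℝ) : ℝ :=
  ∑ ℓ ∈ Finset.range (n + 1), (n.choose ℓ : ℝ) * p ^ ℓ * (1 - p) ^ (n - ℓ) * g ℓ

open scoped fwdDiff

theorem binExp_eq_sum_antidiagonal (n : ℕ) (p : ℝ) (g : ℕ → ℝ) :
    binExp n p g =
      ∑ ij ∈ antidiagonal n, (n.choose ij.1 : ℝ) * (p ^ ij.1 * (1 - p) ^ ij.2 * g ij.1) := by
  rw [Nat.sum_antidiagonal_eq_sum_range_succ_mk, binExp]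
  simp only [mul_assoc]

@[simp]
theorem binExp_zero (p : ℝ) (g : ℕ → ℝ) : binExp 0 p g = g 0 := by
  simp [binExp]

theorem binExp_succ (n : ℕ) (p : ℝ) (g : ℕ → ℝ) :
    binExp (n + 1) p g = (1 - p) * binExp n p g + p * binExp n p (fun ℓ => g (ℓ + 1)) := by
  rw [binExp_eq_sum_antidiagonal, binExp_eq_sum_antidiagonal, binExp_eq_sum_antidiagonal,
    sum_antidiagonal_choose_succ_mul (fun i j => p ^ i * (1 - p) ^ j * g i), mul_sum, mul_sum]
  congr 1 <;> refine sum_congr rfl fun ij hij => ?_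
  · ring
  · rw [Nat.choose_symm_of_eq_add (mem_antidiagonal.1 hij).symm]
    ring

theorem binExp_sub (n : ℕ) (p : ℝ) (f g : ℕ → ℝ) :
    binExp n p (f - g) = binExp n p f - binExp n p g := by
  simp only [binExp, ← sum_sub_distrib, Pi.sub_apply, mul_sub]

theorem hasDerivAt_binExp_succ (n : ℕ) (g : ℕ → ℝ) (x : ℝ) :
    HasDerivAt (fun p => binExp (n + 1) p g) ((n + 1) * binExp n x (Δ_[1] g)) x := by
  have hq : HasDerivAt (fun p : ℝ => 1 - p) (-1) x := by
    simpa using (hasDerivAt_id x).const_sub 1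
  induction n generalizing g with
  | zero =>
    rw [funext fun p => binExp_succ 0 p g]
    simp only [binExp_zero]
    refine ((hq.mul_const _).add ((hasDerivAt_id' x).mul_const _)).congr_deriv ?_
    simp only [fwdDiff, CharP.cast_eq_zero]
    ring
  | succ n ih =>
    have hΔ : binExp (n + 1) x (Δ_[1] g) =
        binExp (n + 1) x (fun ℓ => g (ℓ + 1)) - binExp (n + 1) x g :=
      binExp_sub _ _ _ _
    have hs : binExp (n + 1) x (Δ_[1] g) =
        (1 - x) * binExp n x (Δ_[1] g) + x * binExp n x (Δ_[1] fun ℓ => g (ℓ + 1)) :=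
      binExp_succ n x _
    rw [funext fun p => binExp_succ (n + 1) p g]
    refine ((hq.fun_mul (ih g)).fun_add ((hasDerivAt_id' x).fun_mul (ih _))).congr_deriv ?_
    push_cast
    linear_combination (-(n + 1) : ℝ) * hs - hΔ

theorem binExp_neg {n : ℕ} {p : ℝ} (hp₀ : 0 ≤ p) (hp₁ : p < 1) {f : ℕ → ℝ}
    (hf : ∀ ℓ, f ℓ ≤ 0) (hf₀ : f 0 < 0) : binExp n p f < 0 := by
  have hweight : ∀ ℓ, 0 ≤ (n.choose ℓ : ℝ) * p ^ ℓ * (1 - p) ^ (n - ℓ) := fun ℓ =>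
    mul_nonneg (mul_nonneg (Nat.cast_nonneg _) (pow_nonneg hp₀ _))
      (pow_nonneg (sub_nonneg.2 hp₁.le) _)
  have hrest : ∑ ℓ ∈ range n, (n.choose (ℓ + 1) : ℝ) * p ^ (ℓ + 1) * (1 - p) ^ (n - (ℓ + 1)) *
      f (ℓ + 1) ≤ 0 :=
    sum_nonpos fun ℓ _ => mul_nonpos_of_nonneg_of_nonpos (hweight _) (hf _)
  have hfirst : (1 - p) ^ n * f 0 < 0 := mul_neg_of_pos_of_neg (pow_pos (sub_pos.2 hp₁) n) hf₀
  rw [binExp, sum_range_succ']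
  simpa using add_neg_of_nonpos_of_neg hrest hfirst

theorem stmt1 (n : ℕ) (hn : 1 ≤ n) (g : ℕ → ℝ) (hg : Antitone g) (hg01 : g 1 < g 0) :
    StrictAntiOn (fun p => binExp n p g) (Set.Ioo 0 1) := by
  obtain ⟨m, rfl⟩ : ∃ m, n = m + 1 := ⟨n - 1, by omega⟩
  have hΔ : ∀ ℓ, Δ_[1] g ℓ ≤ 0 := fun ℓ => sub_nonpos.2 (hg ℓ.le_succ)
  have hΔ₀ : Δ_[1] g 0 < 0 := sub_neg.2 hg01
  refine strictAntiOn_of_deriv_neg (convex_Ioo 0 1)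
    (fun x _ => (hasDerivAt_binExp_succ m g x).continuousAt.continuousWithinAt) ?_
  rw [interior_Ioo]
  rintro x ⟨hx₀, hx₁⟩
  rw [(hasDerivAt_binExp_succ m g x).deriv]
  exact mul_neg_of_pos_of_neg (by positivity) (binExp_neg hx₀.le hx₁ hΔ hΔ₀)
end

section
/- If g : ℕ → ℝ is convex (i.e., g(ℓ+2) + g(ℓ) ≥ 2 g(ℓ+1) for all ℓ), then p ↦ E[g(X(n,p))] is convex in p on [0,1]; if g is concave, the expectation is concave in p. Moreover, if n > 1 and (g(2)+g(0))/2 ≠ g(1), the convexity/concavity is strict. -/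
/-!
`p ↦ E[g(X(n,p))]` is the Bernstein polynomial `∑ g(ℓ) b_{n,ℓ}(p)`. Differentiating a Bernstein
polynomial of degree `n + 1` gives `n + 1` times the Bernstein polynomial of degree `n` of the
forward difference `Δg`, so the second derivative in `p` is `n (n - 1) E[Δ²g(X(n-2,p))]`.
Convexity of `g` means `Δ²g ≥ 0`, so this is nonnegative on `[0,1]`; if moreover `Δ²g(0) > 0`,
the term `ℓ = 0` makes it positive on `[0,1)`. Concavity follows by replacing `g` with `-g`.
-/

open Finset

open Polynomial fwdDiff

lemma fwdDiff_iter_neg {M G : Type*} [AddCommMonoid M] [AddCommGroup G] (h : M) (f : M → G)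
    (n : ℕ) : (Δ_[h])^[n] (-f) = -(Δ_[h])^[n] f := by
  simpa using fwdDiff_iter_const_smul h (-1 : ℤ) f n

lemma fwdDiff_iter_two_apply {G : Type*} [AddCommGroup G] (f : ℕ → G) (ℓ : ℕ) :
    (Δ_[1])^[2] f ℓ = f (ℓ + 2) - 2 • f (ℓ + 1) + f ℓ := by
  change Δ_[1] (Δ_[1] f) ℓ = _
  simp only [fwdDiff, add_assoc, one_add_one_eq_two]
  abel

namespace Polynomial

section BernsteinSum

variable {R : Type*} [CommRing R]

noncomputable def bernsteinSum (n : ℕ) (f : ℕ → R) : R[X] :=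
  ∑ ν ∈ range (n + 1), f ν • bernsteinPolynomial R n ν

lemma sum_range_succ_smul_bernsteinPolynomial (n : ℕ) (f : ℕ → R) :
    ∑ ν ∈ range (n + 2), f ν • bernsteinPolynomial R n ν = bernsteinSum n f := by
  rw [sum_range_succ, bernsteinPolynomial.eq_zero_of_lt R (Nat.lt_succ_self n), smul_zero,
    add_zero, bernsteinSum]

lemma bernsteinSum_fwdDiff (n : ℕ) (f : ℕ → R) :
    bernsteinSum n (Δ_[1] f) =
      ∑ ν ∈ range (n + 1), f (ν + 1) • bernsteinPolynomial R n ν - bernsteinSum n f := by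
  simp only [bernsteinSum, fwdDiff, sub_smul, sum_sub_distrib]

lemma derivative_bernsteinSum_succ (n : ℕ) (f : ℕ → R) :
    derivative (bernsteinSum (n + 1) f) = (n + 1) • bernsteinSum n (Δ_[1] f) := by
  rw [bernsteinSum_fwdDiff, ← sum_range_succ_smul_bernsteinPolynomial n f,
    sum_range_succ' (fun ν => f ν • bernsteinPolynomial R n ν), bernsteinSum, map_sum,
    sum_range_succ']
  simp only [derivative_smul, bernsteinPolynomial.derivative_succ,
    bernsteinPolynomial.derivative_zero, Nat.add_sub_cancel, mul_sub, smul_sub, sum_sub_distrib,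
    neg_mul, smul_neg, ← mul_smul_comm, ← mul_sum, nsmul_eq_mul]
  ring

lemma iterate_derivative_bernsteinSum (n k : ℕ) (f : ℕ → R) :
    derivative^[k] (bernsteinSum (n + k) f) =
      (n + k).descFactorial k • bernsteinSum n ((Δ_[1])^[k] f) := by
  induction k generalizing f with
  | zero => simp
  | succ k ih =>
    rw [Function.iterate_succ_apply, ← add_assoc, derivative_bernsteinSum_succ,
      iterate_derivative_smul, ih, smul_smul, Function.iterate_succ_apply,
      Nat.succ_descFactorial_succ]

lemma natDegree_bernsteinSum_le (n : ℕ) (f : ℕ → R) : (bernsteinSum n f).natDegree ≤ n := by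
  refine natDegree_sum_le_of_forall_le _ _ fun ν hν => (natDegree_smul_le _ _).trans ?_
  unfold bernsteinPolynomial
  compute_degree
  exact (Nat.add_sub_of_le (Nat.le_of_lt_succ (mem_range.1 hν))).le

end BernsteinSum

lemma iterate_deriv_eval (P : ℝ[X]) (k : ℕ) :
    deriv^[k] (fun x => P.eval x) = fun x => (derivative^[k] P).eval x := by
  induction k generalizing P with
  | zero => rfl
  | succ k ih =>
    have hP : (_root_.deriv fun x => P.eval x) = fun x => P.derivative.eval x := by
      ext; exact P.deriv
    rw [Function.iterate_succ_apply, hP, ih, Function.iterate_succ_apply]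

lemma convexOn_eval {P : ℝ[X]} {D : Set ℝ} (hD : Convex ℝ D)
    (hP : ∀ x ∈ interior D, 0 ≤ (derivative^[2] P).eval x) : ConvexOn ℝ D fun x => P.eval x :=
  convexOn_of_deriv2_nonneg hD P.continuousOn P.differentiable.differentiableOn
    (P.derivative.differentiable.differentiableOn.congr fun _ _ => P.deriv)
    (by simpa only [iterate_deriv_eval] using hP)

lemma strictConvexOn_eval {P : ℝ[X]} {D : Set ℝ} (hD : Convex ℝ D)
    (hP : ∀ x ∈ interior D, 0 < (derivative^[2] P).eval x) :
    StrictConvexOn ℝ D fun x => P.eval x :=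
  strictConvexOn_of_deriv2_pos hD P.continuousOn (by simpa only [iterate_deriv_eval] using hP)

end Polynomial

lemma eval_bernsteinSum (n : ℕ) (g : ℕ → ℝ) (p : ℝ) :
    (bernsteinSum n g).eval p = binExp n p g := by
  simp only [bernsteinSum, binExp, eval_finsetSum, eval_smul, bernsteinPolynomial, eval_mul,
    eval_pow, eval_natCast, eval_sub, eval_one, eval_X, smul_eq_mul]
  exact sum_congr rfl fun ℓ _ => by ring

lemma binExp_neg_s2 (n : ℕ) (g : ℕ → ℝ) :
    (fun p => binExp n p (-g)) = -fun p => binExp n p g := by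
  ext p
  simp only [binExp, Pi.neg_apply, mul_neg, sum_neg_distrib]

lemma binExp_nonneg (n : ℕ) {p : ℝ} {g : ℕ → ℝ} (hg : ∀ ℓ, 0 ≤ g ℓ) (hp : p ∈ Set.Icc 0 1) :
    0 ≤ binExp n p g := by
  have : 0 ≤ 1 - p := sub_nonneg.2 hp.2
  exact sum_nonneg fun ℓ _ => mul_nonneg (by have := hp.1; positivity) (hg ℓ)

lemma binExp_pos (n : ℕ) {p : ℝ} {g : ℕ → ℝ} (hg : ∀ ℓ, 0 ≤ g ℓ) (hg₀ : 0 < g 0)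
    (hp : p ∈ Set.Ico 0 1) : 0 < binExp n p g := by
  have : 0 < 1 - p := sub_pos.2 hp.2
  refine sum_pos' (fun ℓ _ => mul_nonneg (by have := hp.1; positivity) (hg ℓ))
    ⟨0, mem_range.2 n.succ_pos, ?_⟩
  simpa using mul_pos (pow_pos this n) hg₀

lemma eval_iterate_derivative_two_bernsteinSum (m : ℕ) (g : ℕ → ℝ) (p : ℝ) :
    (derivative^[2] (bernsteinSum (m + 2) g)).eval p =
      (m + 2).descFactorial 2 * binExp m p ((Δ_[1])^[2] g) := by
  rw [iterate_derivative_bernsteinSum, eval_smul, eval_bernsteinSum, nsmul_eq_mul]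

lemma convexOn_binExp (n : ℕ) {g : ℕ → ℝ} (hg : ∀ ℓ, 0 ≤ (Δ_[1])^[2] g ℓ) :
    ConvexOn ℝ (Set.Icc 0 1) fun p => binExp n p g := by
  simp_rw [← eval_bernsteinSum]
  refine convexOn_eval (convex_Icc 0 1) fun p hp => ?_
  rw [interior_Icc] at hp
  rcases lt_or_ge n 2 with hn | hn
  · rw [iterate_derivative_eq_zero ((natDegree_bernsteinSum_le n g).trans_lt hn), eval_zero]
  · obtain ⟨m, rfl⟩ := Nat.exists_eq_add_of_le' hn
    rw [eval_iterate_derivative_two_bernsteinSum]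
    exact mul_nonneg (Nat.cast_nonneg _) (binExp_nonneg m hg (Set.Ioo_subset_Icc_self hp))

lemma strictConvexOn_binExp {n : ℕ} (hn : 2 ≤ n) {g : ℕ → ℝ} (hg : ∀ ℓ, 0 ≤ (Δ_[1])^[2] g ℓ)
    (hg₀ : 0 < (Δ_[1])^[2] g 0) : StrictConvexOn ℝ (Set.Icc 0 1) fun p => binExp n p g := by
  obtain ⟨m, rfl⟩ := Nat.exists_eq_add_of_le' hn
  simp_rw [← eval_bernsteinSum]
  refine strictConvexOn_eval (convex_Icc 0 1) fun p hp => ?_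
  rw [interior_Icc] at hp
  rw [eval_iterate_derivative_two_bernsteinSum]
  exact mul_pos (Nat.cast_pos.2 (Nat.descFactorial_pos.2 (by omega)))
    (binExp_pos m hg hg₀ (Set.Ioo_subset_Ico_self hp))

lemma concaveOn_binExp (n : ℕ) {g : ℕ → ℝ} (hg : ∀ ℓ, (Δ_[1])^[2] g ℓ ≤ 0) :
    ConcaveOn ℝ (Set.Icc 0 1) fun p => binExp n p g := by
  rw [← neg_convexOn_iff, ← binExp_neg_s2]
  exact convexOn_binExp n fun ℓ => by simpa [fwdDiff_iter_neg] using hg ℓ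

lemma strictConcaveOn_binExp {n : ℕ} (hn : 2 ≤ n) {g : ℕ → ℝ} (hg : ∀ ℓ, (Δ_[1])^[2] g ℓ ≤ 0)
    (hg₀ : (Δ_[1])^[2] g 0 < 0) : StrictConcaveOn ℝ (Set.Icc 0 1) fun p => binExp n p g := by
  rw [← neg_strictConvexOn_iff, ← binExp_neg_s2]
  exact strictConvexOn_binExp hn (fun ℓ => by simpa [fwdDiff_iter_neg] using hg ℓ)
    (by simpa [fwdDiff_iter_neg] using hg₀)

theorem stmt2 (n : ℕ) (g : ℕ → ℝ) :
    ((∀ ℓ, 2 * g (ℓ + 1) ≤ g (ℓ + 2) + g ℓ) →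
      ConvexOn ℝ (Set.Icc (0 : ℝ) 1) (fun p => binExp n p g)) ∧
    ((∀ ℓ, g (ℓ + 2) + g ℓ ≤ 2 * g (ℓ + 1)) →
      ConcaveOn ℝ (Set.Icc (0 : ℝ) 1) (fun p => binExp n p g)) ∧
    (1 < n → (g 2 + g 0) / 2 ≠ g 1 →
      ((∀ ℓ, 2 * g (ℓ + 1) ≤ g (ℓ + 2) + g ℓ) →
        StrictConvexOn ℝ (Set.Icc (0 : ℝ) 1) (fun p => binExp n p g)) ∧
      ((∀ ℓ, g (ℓ + 2) + g ℓ ≤ 2 * g (ℓ + 1)) →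
        StrictConcaveOn ℝ (Set.Icc (0 : ℝ) 1) (fun p => binExp n p g))) := by
  have second_diff (ℓ : ℕ) : (Δ_[1])^[2] g ℓ = g (ℓ + 2) + g ℓ - 2 * g (ℓ + 1) := by
    rw [fwdDiff_iter_two_apply, nsmul_eq_mul, Nat.cast_ofNat]
    ring
  refine ⟨fun h => convexOn_binExp n fun ℓ => second_diff ℓ ▸ sub_nonneg.2 (h ℓ),
    fun h => concaveOn_binExp n fun ℓ => second_diff ℓ ▸ sub_nonpos.2 (h ℓ), fun hn hg => ?_⟩
  have h₀ : (Δ_[1])^[2] g 0 ≠ 0 := by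
    rw [second_diff, sub_ne_zero]
    contrapose! hg
    linarith
  exact ⟨fun h => strictConvexOn_binExp hn (fun ℓ => second_diff ℓ ▸ sub_nonneg.2 (h ℓ))
      ((second_diff 0 ▸ sub_nonneg.2 (h 0)).lt_of_ne' h₀),
    fun h => strictConcaveOn_binExp hn (fun ℓ => second_diff ℓ ▸ sub_nonpos.2 (h ℓ))
      ((second_diff 0 ▸ sub_nonpos.2 (h 0)).lt_of_ne h₀)⟩
end

section
/- Let Y be a Poisson binomial random variable with mean μ = sum of its Bernoulli parameters, and let γ > 0 be fixed. Then (1+μ)^{-γ} ≤ E[(1+Y)^{-γ}], i.e., Jensen's inequality gives the lower bound; moreover, E[(1+Y)^{-γ}] ≤ (1+μ)^{-γ}(1 + O(sqrt(log μ / μ))) as μ → ∞. -/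
open Finset

noncomputable def pbExp (n : ℕ) (p : Fin n → ℝ) (h : ℕ → ℝ) : ℝ :=
  ∑ S ∈ (Finset.univ : Finset (Fin n)).powerset,
    (∏ i ∈ S, p i) * (∏ i ∈ Finset.univ \ S, (1 - p i)) * h S.card

/-!
The lower bound is Jensen's inequality for the convex function `y ↦ (1 + y) ^ (-γ)`.

For the upper bound, split according to whether `Y ≥ μ - δ`. On that event `(1 + Y) ^ (-γ)` is at
most `(1 + μ - δ) ^ (-γ)`; elsewhere it is at most `1`, and the Chernoff bound
`P(Y < μ - δ) ≤ exp (-δ ^ 2 / (2 μ))`, obtained from `E[t ^ Y] = ∏ (1 - pᵢ + pᵢ t) ≤ exp (μ (t - 1))`,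
controls that event. Taking `δ ^ 2 = 2 (γ + 1) μ log μ` makes the tail `μ ^ (-(γ + 1))`, while by
convexity `(1 + μ - δ) ^ (-γ) ≤ (1 + μ) ^ (-γ) (1 + O(δ / μ))` with `δ / μ = O(√(log μ / μ))`.
-/

open Real

lemma Real.exp_le_one_add_add_sq_div_two {x : ℝ} (hx : x ≤ 0) :
    exp x ≤ 1 + x + x ^ 2 / 2 := by
  set y := -x
  have hy : 0 ≤ y := neg_nonneg.2 hx
  have hcubic : 1 + y + y ^ 2 / 2 + y ^ 3 / 6 ≤ exp y := by
    simpa [sum_range_succ, Nat.factorial] using sum_le_exp_of_nonneg hy 4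
  have hprod : 1 ≤ (1 + x + x ^ 2 / 2) * (1 + y + y ^ 2 / 2 + y ^ 3 / 6) := by
    nlinarith [mul_nonneg (pow_nonneg hy 3) (sq_nonneg (y + 1))]
  calc exp x = (exp y)⁻¹ := by rw [exp_neg, inv_inv]
    _ ≤ (1 + y + y ^ 2 / 2 + y ^ 3 / 6)⁻¹ := inv_anti₀ (by positivity) hcubic
    _ ≤ 1 + x + x ^ 2 / 2 := by rwa [inv_le_iff_one_le_mul₀ (by positivity)]

lemma convexOn_rpow_of_nonpos {p : ℝ} (hp : p ≤ 0) :
    ConvexOn ℝ (Set.Ioi 0) fun x : ℝ => x ^ p := by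
  refine ⟨convex_Ioi 0, fun x (hx : 0 < x) y (hy : 0 < y) a b ha hb hab => ?_⟩
  have hxy : 0 < a * x + b * y := convex_Ioi (0 : ℝ) hx hy ha hb hab
  have hlog : a * log x + b * log y ≤ log (a * x + b * y) :=
    strictConcaveOn_log_Ioi.concaveOn.2 hx hy ha hb hab
  calc (a * x + b * y) ^ p = exp (p * log (a * x + b * y)) := by
        rw [rpow_def_of_pos hxy, mul_comm]
    _ ≤ exp (a * (p * log x) + b * (p * log y)) :=
        exp_le_exp.2 (by nlinarith [mul_le_mul_of_nonpos_left hlog hp])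
    _ ≤ a * exp (p * log x) + b * exp (p * log y) :=
        convexOn_exp.2 trivial trivial ha hb hab
    _ = a * x ^ p + b * y ^ p := by simp only [rpow_def_of_pos hx, rpow_def_of_pos hy, mul_comm]

lemma convexOn_one_add_rpow_of_nonpos {q : ℝ} (hq : q ≤ 0) :
    ConvexOn ℝ (Set.Ici 0) fun y : ℝ => (1 + y) ^ q :=
  ((convexOn_rpow_of_nonpos hq).translate_right 1).subset
    (fun y (hy : 0 ≤ y) => show (0 : ℝ) < 1 + y by linarith) (convex_Ici 0)

lemma one_sub_rpow_neg_le {γ x : ℝ} (hγ : 0 ≤ γ) (hx₀ : 0 ≤ x) (hx₁ : x ≤ 1 / 2) :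
    (1 - x) ^ (-γ) ≤ 1 + 2 * (2 ^ γ - 1) * x := by
  have h := (convexOn_rpow_of_nonpos (neg_nonpos.2 hγ)).2 (Set.mem_Ioi.2 one_pos)
    (show (1 / 2 : ℝ) ∈ Set.Ioi 0 by norm_num) (show 0 ≤ 1 - 2 * x by linarith)
    (show 0 ≤ 2 * x by linarith) (by ring)
  simp only [smul_eq_mul, one_rpow] at h
  have hhalf : (1 / 2 : ℝ) ^ (-γ) = 2 ^ γ := by
    rw [one_div, inv_rpow (by norm_num), rpow_neg (by norm_num), inv_inv]
  rw [hhalf] at h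
  calc (1 - x) ^ (-γ) = ((1 - 2 * x) * 1 + 2 * x * (1 / 2)) ^ (-γ) := by ring_nf
    _ ≤ 1 + 2 * (2 ^ γ - 1) * x := by linarith

lemma sub_rpow_neg_le {γ ν δ : ℝ} (hγ : 0 ≤ γ) (hν : 0 < ν) (hδ₀ : 0 ≤ δ) (hδ₁ : δ ≤ ν / 2) :
    (ν - δ) ^ (-γ) ≤ ν ^ (-γ) * (1 + 2 * (2 ^ γ - 1) * (δ / ν)) := by
  have hx₁ : δ / ν ≤ 1 / 2 := by rwa [div_le_iff₀ hν, div_mul_eq_mul_div, one_mul]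
  calc (ν - δ) ^ (-γ) = ν ^ (-γ) * (1 - δ / ν) ^ (-γ) := by
        rw [← mul_rpow hν.le (by linarith), mul_sub, mul_one, mul_div_cancel₀ _ hν.ne']
    _ ≤ ν ^ (-γ) * (1 + 2 * (2 ^ γ - 1) * (δ / ν)) :=
        mul_le_mul_of_nonneg_left (one_sub_rpow_neg_le hγ (by positivity) hx₁) (by positivity)

lemma rpow_neg_add_one_le {γ μ : ℝ} (hγ : 0 ≤ γ) (hμ : 1 ≤ μ) :
    μ ^ (-(γ + 1)) ≤ (1 + μ) ^ (-γ) * (2 ^ γ * μ⁻¹) := by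
  have hhalf : ((1 + μ) / 2) ^ (-γ) = (1 + μ) ^ (-γ) * 2 ^ γ := by
    rw [div_rpow (by linarith) (by norm_num), rpow_neg (by norm_num : (0 : ℝ) ≤ 2), div_inv_eq_mul]
  calc μ ^ (-(γ + 1)) = μ ^ (-γ) * μ⁻¹ := by
        rw [neg_add, rpow_add (by linarith), rpow_neg_one]
    _ ≤ ((1 + μ) / 2) ^ (-γ) * μ⁻¹ := by
        gcongr ?_ * _
        exact rpow_le_rpow_of_nonpos (by linarith) (by linarith) (neg_nonpos.2 hγ)
    _ = (1 + μ) ^ (-γ) * (2 ^ γ * μ⁻¹) := by rw [hhalf, mul_assoc]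

lemma eventually_one_le_log_and_mul_log_le {c : ℝ} (hc : 0 < c) :
    ∀ᶠ x in Filter.atTop, 1 ≤ log x ∧ c * log x ≤ x := by
  filter_upwards [tendsto_log_atTop.eventually_ge_atTop 1,
    isLittleO_log_id_atTop.bound (inv_pos.2 hc), Filter.eventually_ge_atTop 0] with x h1 h2 h0
  rw [norm_of_nonneg (by linarith), id, norm_of_nonneg h0] at h2
  exact ⟨h1, (le_inv_mul_iff₀ hc).1 h2⟩

namespace PoissonBinomial

variable {ι : Type*} [DecidableEq ι] (p : ι → ℝ) (s : Finset ι)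

/-- `expect p s h = E[h Y]` for `Y = ∑ i ∈ s, Yᵢ` with independent `Yᵢ ~ Bernoulli (p i)`;
`weight p s S` is the probability that `{i ∈ s | Yᵢ = 1} = S`. -/
noncomputable def weight (S : Finset ι) : ℝ := (∏ i ∈ S, p i) * ∏ i ∈ s \ S, (1 - p i)

noncomputable def expect (h : ℕ → ℝ) : ℝ := ∑ S ∈ s.powerset, weight p s S * h S.card

variable {p s}

lemma weight_nonneg (hp : ∀ i ∈ s, p i ∈ Set.Icc 0 1) {S : Finset ι} (hS : S ⊆ s) :
    0 ≤ weight p s S :=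
  mul_nonneg (prod_nonneg fun i hi => (hp i (hS hi)).1)
    (prod_nonneg fun i hi => sub_nonneg.2 (hp i (mem_sdiff.1 hi).1).2)

lemma expect_empty (h : ℕ → ℝ) : expect p ∅ h = h 0 := by
  simp [expect, weight]

lemma expect_insert {a : ι} (ha : a ∉ s) (h : ℕ → ℝ) :
    expect p (insert a s) h =
      p a * expect p s (fun k => h (k + 1)) + (1 - p a) * expect p s h := by
  rw [expect, sum_powerset_insert ha, add_comm, expect, expect, mul_sum, mul_sum]
  congr 1 <;> refine sum_congr rfl fun S hS => ?_ <;> simp only [weight]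
  · have haS : a ∉ S := fun haS => ha (mem_powerset.1 hS haS)
    rw [prod_insert haS, insert_sdiff_insert, sdiff_insert_of_notMem ha, card_insert_of_notMem haS]
    ring
  · rw [insert_sdiff_of_notMem _ fun haS => ha (mem_powerset.1 hS haS),
      prod_insert fun h => ha (mem_sdiff.1 h).1]
    ring

variable (p s)

lemma expect_add (h₁ h₂ : ℕ → ℝ) :
    expect p s (fun k => h₁ k + h₂ k) = expect p s h₁ + expect p s h₂ := by
  simp only [expect, mul_add, sum_add_distrib]

lemma expect_const_mul (c : ℝ) (h : ℕ → ℝ) :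
    expect p s (fun k => c * h k) = c * expect p s h := by
  simp only [expect, mul_sum, mul_left_comm]

lemma expect_const (c : ℝ) : expect p s (fun _ => c) = c := by
  induction s using Finset.induction_on with
  | empty => exact expect_empty _
  | insert a s ha ih => rw [expect_insert ha, ih]; ring

lemma sum_weight : ∑ S ∈ s.powerset, weight p s S = 1 := by
  simpa [expect] using expect_const p s 1

lemma expect_natCast : expect p s (fun k => (k : ℝ)) = ∑ i ∈ s, p i := by
  induction s using Finset.induction_on with
  | empty => simp [expect_empty]
  | insert a s ha ih =>
    simp only [expect_insert ha, Nat.cast_succ, expect_add, expect_const, ih, sum_insert ha]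
    ring

lemma expect_pow (t : ℝ) : expect p s (fun k => t ^ k) = ∏ i ∈ s, (1 - p i + p i * t) := by
  induction s using Finset.induction_on with
  | empty => simp [expect_empty]
  | insert a s ha ih =>
    simp only [expect_insert ha, pow_succ, mul_comm _ t, expect_const_mul, ih, prod_insert ha]
    ring

variable {p s}

lemma expect_mono (hp : ∀ i ∈ s, p i ∈ Set.Icc 0 1) {h₁ h₂ : ℕ → ℝ} (h : ∀ k, h₁ k ≤ h₂ k) :
    expect p s h₁ ≤ expect p s h₂ :=
  sum_le_sum fun _ hS => mul_le_mul_of_nonneg_left (h _) (weight_nonneg hp (mem_powerset.1 hS))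

lemma _root_.ConvexOn.map_sum_le_expect {f : ℝ → ℝ} (hf : ConvexOn ℝ (Set.Ici 0) f)
    (hp : ∀ i ∈ s, p i ∈ Set.Icc 0 1) :
    f (∑ i ∈ s, p i) ≤ expect p s (fun k => f k) := by
  rw [← expect_natCast]
  exact hf.map_sum_le (fun S hS => weight_nonneg hp (mem_powerset.1 hS)) (sum_weight p s)
      (p := fun S => (S.card : ℝ)) fun _ _ => Set.mem_Ici.2 (Nat.cast_nonneg _)

lemma expect_exp_mul_le (hp : ∀ i ∈ s, p i ∈ Set.Icc 0 1) (t : ℝ) :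
    expect p s (fun k => exp (t * k)) ≤ exp ((∑ i ∈ s, p i) * (exp t - 1)) := by
  simp only [mul_comm t, exp_nat_mul, expect_pow, sum_mul, exp_sum]
  refine prod_le_prod (fun i hi => ?_) fun i _ => ?_
  · nlinarith [(hp i hi).1, (hp i hi).2, exp_pos t]
  · linarith [add_one_le_exp (p i * (exp t - 1))]

lemma expect_le_add_exp_of_lower_tail (hp : ∀ i ∈ s, p i ∈ Set.Icc 0 1) {f : ℕ → ℝ} {B δ : ℝ}
    (hμ : 0 < ∑ i ∈ s, p i) (hδ : 0 ≤ δ) (hB : 0 ≤ B) (hf : ∀ k, f k ≤ 1)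
    (hfB : ∀ k : ℕ, ∑ i ∈ s, p i - δ ≤ k → f k ≤ B) :
    expect p s f ≤ B + exp (-(δ ^ 2 / (2 * ∑ i ∈ s, p i))) := by
  set μ := ∑ i ∈ s, p i
  set σ := δ / μ
  have hσ : 0 ≤ σ := div_nonneg hδ hμ.le
  -- the exponential term is at least `1` when `k < μ - δ`
  have hpoint : ∀ k : ℕ, f k ≤ B + exp (σ * (μ - δ)) * exp (-σ * k) := by
    intro k
    rw [← exp_add]
    rcases le_or_gt (μ - δ) k with hk | hk
    · linarith [hfB k hk, exp_pos (σ * (μ - δ) + -σ * k)]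
    · linarith [hf k, one_le_exp (show 0 ≤ σ * (μ - δ) + -σ * k by nlinarith)]
  calc expect p s f
      ≤ expect p s (fun k => B + exp (σ * (μ - δ)) * exp (-σ * k)) := expect_mono hp hpoint
    _ = B + exp (σ * (μ - δ)) * expect p s (fun k => exp (-σ * k)) := by
        rw [expect_add, expect_const, expect_const_mul]
    _ ≤ B + exp (σ * (μ - δ)) * exp (μ * (exp (-σ) - 1)) := by
        gcongr; exact expect_exp_mul_le hp _
    _ ≤ B + exp (σ * (μ - δ) + μ * (-σ + σ ^ 2 / 2)) := by
        rw [← exp_add]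
        gcongr
        linarith [exp_le_one_add_add_sq_div_two (neg_nonpos.2 hσ)]
    _ = B + exp (-(δ ^ 2 / (2 * μ))) := by
        congr 2
        simp only [σ]
        field_simp
        ring

lemma expect_one_add_rpow_neg_le {γ δ : ℝ} (hγ : 0 ≤ γ) (hp : ∀ i ∈ s, p i ∈ Set.Icc 0 1)
    (hμ : 0 < ∑ i ∈ s, p i) (hδ : 0 ≤ δ) (hδμ : δ < 1 + ∑ i ∈ s, p i) :
    expect p s (fun k => (1 + k) ^ (-γ)) ≤
      (1 + ∑ i ∈ s, p i - δ) ^ (-γ) + exp (-(δ ^ 2 / (2 * ∑ i ∈ s, p i))) :=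
  expect_le_add_exp_of_lower_tail hp hμ hδ (rpow_nonneg (by linarith) _)
    (fun k => rpow_le_one_of_one_le_of_nonpos (by simp) (neg_nonpos.2 hγ))
    (fun k hk => rpow_le_rpow_of_nonpos (by linarith) (by linarith) (neg_nonpos.2 hγ))

lemma expect_one_add_rpow_neg_le_of_large {γ : ℝ} (hγ : 0 ≤ γ)
    (hp : ∀ i ∈ s, p i ∈ Set.Icc 0 1) (hlog : 1 ≤ log (∑ i ∈ s, p i))
    (hlarge : 8 * (γ + 1) * log (∑ i ∈ s, p i) ≤ ∑ i ∈ s, p i) :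
    expect p s (fun k => (1 + k) ^ (-γ)) ≤ (1 + ∑ i ∈ s, p i) ^ (-γ) *
      (1 + (2 * (2 ^ γ - 1) * √(2 * (γ + 1)) + 2 ^ γ) * √(log (∑ i ∈ s, p i) / ∑ i ∈ s, p i)) := by
  set μ := ∑ i ∈ s, p i
  set R := √(log μ / μ)
  have hμ₁ : 1 ≤ μ := by nlinarith
  have hμ : 0 < μ := by linarith
  -- the deviation for which the Chernoff tail `exp (-δ ^ 2 / (2 μ))` equals `μ ^ (-(γ + 1))`
  set δ := √(2 * (γ + 1)) * μ * R
  have hδ : 0 ≤ δ := by positivity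
  have hδsq : δ ^ 2 = 2 * (γ + 1) * μ * log μ := by
    rw [mul_pow, mul_pow, sq_sqrt (by positivity), sq_sqrt (by positivity)]
    field_simp
  have hδμ : δ ≤ μ / 2 :=
    (pow_le_pow_iff_left₀ hδ (by positivity) two_ne_zero).1 (by nlinarith)
  have htail : exp (-(δ ^ 2 / (2 * μ))) = μ ^ (-(γ + 1)) := by
    rw [hδsq, rpow_def_of_pos hμ]
    congr 1
    field_simp
  have hinv : μ⁻¹ ≤ R := by
    rw [le_sqrt (by positivity) (by positivity), le_div_iff₀ hμ]
    calc μ⁻¹ ^ 2 * μ = μ⁻¹ := by field_simp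
      _ ≤ log μ := (inv_le_one_of_one_le₀ hμ₁).trans hlog
  have hdev : δ / (1 + μ) ≤ √(2 * (γ + 1)) * R :=
    calc δ / (1 + μ) ≤ δ / μ := div_le_div_of_nonneg_left hδ hμ (by linarith)
      _ = √(2 * (γ + 1)) * R := by field_simp; ring
  have h2γ : 0 ≤ (2 : ℝ) ^ γ - 1 := sub_nonneg.2 (one_le_rpow one_le_two hγ)
  calc expect p s (fun k => (1 + k) ^ (-γ))
      ≤ (1 + μ - δ) ^ (-γ) + exp (-(δ ^ 2 / (2 * μ))) :=
        expect_one_add_rpow_neg_le hγ hp hμ hδ (by linarith)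
    _ ≤ (1 + μ) ^ (-γ) * (1 + 2 * (2 ^ γ - 1) * (δ / (1 + μ))) +
          (1 + μ) ^ (-γ) * (2 ^ γ * μ⁻¹) := by
        rw [htail]
        exact add_le_add (sub_rpow_neg_le hγ (by linarith) hδ (by linarith))
          (rpow_neg_add_one_le hγ hμ₁)
    _ ≤ (1 + μ) ^ (-γ) * (1 + 2 * (2 ^ γ - 1) * (√(2 * (γ + 1)) * R)) +
          (1 + μ) ^ (-γ) * (2 ^ γ * R) := by
        gcongr
    _ = (1 + μ) ^ (-γ) * (1 + (2 * (2 ^ γ - 1) * √(2 * (γ + 1)) + 2 ^ γ) * R) := by ring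

end PoissonBinomial

theorem stmt11 (γ : ℝ) (hγ : 0 < γ) :
    (∀ (n : ℕ) (p : Fin n → ℝ), (∀ i, p i ∈ Set.Icc (0 : ℝ) 1) →
      (1 + ∑ i, p i) ^ (-γ) ≤ pbExp n p (fun y => (1 + (y : ℝ)) ^ (-γ))) ∧
    ∃ C M : ℝ, 0 < C ∧ ∀ (n : ℕ) (p : Fin n → ℝ), (∀ i, p i ∈ Set.Icc (0 : ℝ) 1) →
      M ≤ ∑ i, p i →
      pbExp n p (fun y => (1 + (y : ℝ)) ^ (-γ)) ≤
        (1 + ∑ i, p i) ^ (-γ) *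
          (1 + C * Real.sqrt (Real.log (∑ i, p i) / (∑ i, p i))) := by
  refine ⟨fun n p hp => ?_, ?_⟩
  · exact (convexOn_one_add_rpow_of_nonpos (neg_nonpos.2 hγ.le)).map_sum_le_expect
      fun i _ => hp i
  obtain ⟨M, hM⟩ := (eventually_one_le_log_and_mul_log_le
    (show 0 < 8 * (γ + 1) by positivity)).exists_forall_of_atTop
  have hC : 0 < 2 * (2 ^ γ - 1) * √(2 * (γ + 1)) + 2 ^ γ :=
    add_pos_of_nonneg_of_pos
      (mul_nonneg (mul_nonneg zero_le_two (sub_nonneg.2 (one_le_rpow one_le_two hγ.le)))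
        (sqrt_nonneg _))
      (rpow_pos_of_pos two_pos γ)
  refine ⟨_, M, hC, fun n p hp hμ => ?_⟩
  exact PoissonBinomial.expect_one_add_rpow_neg_le_of_large hγ.le (fun i _ => hp i)
    (hM _ hμ).1 (hM _ hμ).2
end

section
/- For n players each independently sampling types from distributions given by columns of a strategy matrix P, the sum of expected player utilities sum_i U_i(P) equals sum_k d_k E[C_k / s(C_k)], where C_k is the number of players sampling type k. Consequently, when welfare is defined as W(P) = sum_k d_k Pr[C_k > 0] and s ∈ S_↘, so that x/s(x) ≤ 1, the sum of utilities is at most W(P). -/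
open Finset

noncomputable def jointProb (n K : ℕ) (P : Fin n → Fin K → ℝ) (ω : Fin n → Fin K) : ℝ :=
  ∏ i, P i (ω i)

def congCount (n K : ℕ) (ω : Fin n → Fin K) (k : Fin K) : ℕ :=
  (Finset.univ.filter fun i => ω i = k).card

/-- Player `i`'s expected utility `E[d_{k_i}/s(C_{k_i})]`. -/
noncomputable def PlayerUtil (n K : ℕ) (d : Fin K → ℝ) (s : ℕ → ℝ) (i : Fin n)
    (P : Fin n → Fin K → ℝ) : ℝ :=
  ∑ ω : Fin n → Fin K, jointProb n K P ω * (d (ω i) / s (congCount n K ω (ω i)))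

/-- Welfare `W(P) = ∑_k d_k Pr[C_k > 0]`. -/
noncomputable def Welfare (n K : ℕ) (d : Fin K → ℝ) (P : Fin n → Fin K → ℝ) : ℝ :=
  ∑ k, d k * ∑ ω : Fin n → Fin K,
    jointProb n K P ω * (if 0 < congCount n K ω k then (1 : ℝ) else 0)

theorem stmt16 (n K : ℕ) (d : Fin K → ℝ) (hd : ∀ k, 0 ≤ d k)
    (s : ℕ → ℝ) (hs : ∀ x, 0 < s x)
    (P : Fin n → Fin K → ℝ)
    (hP : ∀ j, (∀ k, 0 ≤ P j k) ∧ ∑ k, P j k = 1) :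
    (∑ i, PlayerUtil n K d s i P =
      ∑ k, d k * ∑ ω : Fin n → Fin K,
        jointProb n K P ω * ((congCount n K ω k : ℝ) / s (congCount n K ω k))) ∧
    ((∀ x : ℕ, 1 ≤ x → (x : ℝ) ≤ s x) →
      ∑ i, PlayerUtil n K d s i P ≤ Welfare n K d P) := by
  have hfib : ∀ (ω : Fin n → Fin K) (g : Fin K → ℝ),
      ∑ i, g (ω i) = ∑ k, (congCount n K ω k : ℝ) * g k := by
    intro ω g
    rw [← Finset.sum_fiberwise (univ : Finset (Fin n)) ω (fun i => g (ω i))]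
    refine Finset.sum_congr rfl fun k _ => ?_
    rw [Finset.sum_congr rfl (fun i hi => ?_), Finset.sum_const, congCount,
      nsmul_eq_mul]
    · exact congrArg g (Finset.mem_filter.mp hi).2
  have key : ∑ i, PlayerUtil n K d s i P =
      ∑ k, d k * ∑ ω : Fin n → Fin K,
        jointProb n K P ω * ((congCount n K ω k : ℝ) / s (congCount n K ω k)) := by
    unfold PlayerUtil
    rw [Finset.sum_comm]
    simp only [Finset.mul_sum]
    conv_rhs => rw [Finset.sum_comm]
    refine Finset.sum_congr rfl fun ω _ => ?_
    rw [← Finset.mul_sum, hfib ω (fun k => d k / s (congCount n K ω k)),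
      Finset.mul_sum]
    refine Finset.sum_congr rfl fun k _ => ?_
    ring
  have hjp : ∀ ω : Fin n → Fin K, 0 ≤ jointProb n K P ω := fun ω =>
    Finset.prod_nonneg fun i _ => (hP i).1 (ω i)
  refine ⟨key, fun hx => ?_⟩
  rw [key]
  unfold Welfare
  refine Finset.sum_le_sum fun k _ => mul_le_mul_of_nonneg_left
    (Finset.sum_le_sum fun ω _ => mul_le_mul_of_nonneg_left ?_ (hjp ω)) (hd k)
  set c := congCount n K ω k with hc
  rcases Nat.eq_zero_or_pos c with h | h
  · simp [h]
  · rw [if_pos h]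
    rw [div_le_one (hs c)]
    exact hx c h
end

section
/- Fix welfare W(P) = sum_k d_k E[h(C_k)] where h(x) = x/s(x) is increasing and discrete-concave with h(0)=0. Then W is submodular in the set of participating players: for player sets A ⊆ B not containing i, W(P(A ∪ {i})) - W(P(A)) ≥ W(P(B ∪ {i})) - W(P(B)). -/
open Finset

/-- Number of players in the set `S` sampling type `k` under outcome `ω`. -/
def congCountS (n K : ℕ) (S : Finset (Fin n)) (ω : Fin n → Fin K) (k : Fin K) : ℕ :=
  (S.filter fun i => ω i = k).card

/-- Welfare when only the players in `S` participate:
`W(P(S)) = ∑_k d_k E[h(C_k(S))]` with `h(x) = x/s(x)`. -/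
noncomputable def WelfareS (n K : ℕ) (d : Fin K → ℝ) (h : ℕ → ℝ)
    (P : Fin n → Fin K → ℝ) (S : Finset (Fin n)) : ℝ :=
  ∑ ω : Fin n → Fin K, jointProb n K P ω * ∑ k, d k * h (congCountS n K S ω k)

lemma diff_antitone (h : ℕ → ℝ)
    (hh_conc : ∀ x : ℕ, h (x + 2) - h (x + 1) ≤ h (x + 1) - h x) :
    ∀ a b : ℕ, a ≤ b → h (b + 1) - h b ≤ h (a + 1) - h a := by
  intro a b hab
  induction b, hab using Nat.le_induction with
  | base => exact le_refl _
  | succ m hm ih => exact le_trans (hh_conc m) ih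

lemma count_insert (n K : ℕ) (S : Finset (Fin n)) (ω : Fin n → Fin K) (k : Fin K)
    (i : Fin n) (hi : i ∉ S) :
    congCountS n K (insert i S) ω k =
      congCountS n K S ω k + (if ω i = k then 1 else 0) := by
  unfold congCountS
  rw [Finset.filter_insert]
  by_cases hk : ω i = k
  · simp only [hk, if_pos rfl, if_true]
    rw [Finset.card_insert_of_notMem (fun hm => hi (Finset.mem_filter.1 hm).1)]
  · simp [hk]

theorem stmt17 (n K : ℕ) (d : Fin K → ℝ) (hd : ∀ k, 0 ≤ d k)
    (h : ℕ → ℝ) (hh0 : h 0 = 0) (hh_nonneg : ∀ x, 0 ≤ h x) (hh_mono : Monotone h)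
    (hh_conc : ∀ x : ℕ, h (x + 2) - h (x + 1) ≤ h (x + 1) - h x)
    (P : Fin n → Fin K → ℝ)
    (hP : ∀ j, (∀ k, 0 ≤ P j k) ∧ ∑ k, P j k = 1)
    (A B : Finset (Fin n)) (hAB : A ⊆ B) (i : Fin n) (hi : i ∉ B) :
    WelfareS n K d h P (insert i B) - WelfareS n K d h P B ≤
      WelfareS n K d h P (insert i A) - WelfareS n K d h P A := by
  have hiA : i ∉ A := fun hA => hi (hAB hA)
  unfold WelfareS
  rw [← Finset.sum_sub_distrib, ← Finset.sum_sub_distrib]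
  apply Finset.sum_le_sum
  intro ω _
  rw [← mul_sub, ← mul_sub]
  have hp : 0 ≤ jointProb n K P ω :=
    Finset.prod_nonneg fun j _ => (hP j).1 (ω j)
  apply mul_le_mul_of_nonneg_left _ hp
  rw [← Finset.sum_sub_distrib, ← Finset.sum_sub_distrib]
  apply Finset.sum_le_sum
  intro k _
  rw [← mul_sub, ← mul_sub]
  apply mul_le_mul_of_nonneg_left _ (hd k)
  rw [count_insert n K B ω k i hi, count_insert n K A ω k i hiA]
  have hcnt : congCountS n K A ω k ≤ congCountS n K B ω k :=
    Finset.card_le_card (Finset.filter_subset_filter _ hAB)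
  by_cases hk : ω i = k
  · simp only [hk, if_pos rfl]
    exact diff_antitone h hh_conc _ _ hcnt
  · simp [hk]
end

section
/- There is a family of instances witnessing that the price of anarchy bound of 2 is asymptotically tight: with n players, values d = [1, 1/n, ..., 1/n] over K > n² types, and identity score function s(x)=x with welfare W(P)=sum_k d_k Pr[C_k>0], the all-players-on-type-1 profile is a Nash equilibrium with welfare 1, while the profile where player 1 plays type 1 and each other player plays uniformly over types 2..K achieves welfare at least 2 - 3/(2n) - 1/n². -/
open Finset

/-- Player `i`'s expected utility with the identity score function `s(x) = x`:
`E[d_{k_i}/C_{k_i}]`. -/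
noncomputable def PlayerUtilId (n K : ℕ) (d : Fin K → ℝ) (i : Fin n)
    (P : Fin n → Fin K → ℝ) : ℝ :=
  ∑ ω : Fin n → Fin K, jointProb n K P ω * (d (ω i) / (congCount n K ω (ω i) : ℝ))

/-- Welfare `W(P) = ∑_k d_k Pr[C_k > 0]`. -/
noncomputable def WelfareId (n K : ℕ) (d : Fin K → ℝ) (P : Fin n → Fin K → ℝ) : ℝ :=
  ∑ k, d k * ∑ ω : Fin n → Fin K,
    jointProb n K P ω * (if 0 < congCount n K ω k then (1 : ℝ) else 0)

/-- Nash equilibrium: no player can strictly improve by a unilateral deviation. -/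
def IsNashId (n K : ℕ) (d : Fin K → ℝ) (P : Fin n → Fin K → ℝ) : Prop :=
  ∀ (i : Fin n) (q : Fin K → ℝ), (∀ k, 0 ≤ q k) → (∑ k, q k) = 1 →
    PlayerUtilId n K d i (Function.update P i q) ≤ PlayerUtilId n K d i P

set_option linter.unusedTactic false
set_option linter.unusedVariables false
lemma congCount_eq_zero_iff (n K : ℕ) (ω : Fin n → Fin K) (k : Fin K) :
    congCount n K ω k = 0 ↔ ∀ i, ω i ≠ k := by
  simp [congCount, Finset.card_eq_zero, Finset.filter_eq_empty_iff]

lemma sum_jointProb_mul_ind (n K : ℕ) (P : Fin n → Fin K → ℝ) (k : Fin K) :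
    ∑ ω : Fin n → Fin K, jointProb n K P ω *
      (if 0 < congCount n K ω k then (1:ℝ) else 0)
    = (∏ i, ∑ k', P i k') - ∏ i, ∑ k' ∈ Finset.univ.erase k, P i k' := by
  have h1 : ∀ ω : Fin n → Fin K,
      (if 0 < congCount n K ω k then (1:ℝ) else 0)
      = 1 - (if ∀ i, ω i ≠ k then 1 else 0) := by
    intro ω
    rcases Nat.eq_zero_or_pos (congCount n K ω k) with h | h
    · simp [h, (congCount_eq_zero_iff n K ω k).1 h]
    · have hc : ¬ (∀ i, ω i ≠ k) := fun hc =>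
        absurd ((congCount_eq_zero_iff n K ω k).2 hc) h.ne'
      simp [h, hc]
  simp only [h1, mul_sub, mul_one, Finset.sum_sub_distrib]
  congr 1
  · rw [Finset.prod_univ_sum (fun _ => (Finset.univ : Finset (Fin K))) (fun i k' => P i k'),
      Fintype.piFinset_univ]
    rfl
  · rw [Finset.prod_univ_sum (fun _ => (Finset.univ.erase k)) (fun i k' => P i k')]
    simp only [mul_ite, mul_one, mul_zero, ← Finset.sum_filter]
    apply Finset.sum_congr
    · ext ω
      simp [Fintype.mem_piFinset]
    · intro ω _; rfl

lemma row_delta (K : ℕ) (hK : 0 < K) :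
    ∑ k' : Fin K, (if (k':ℕ) = 0 then (1:ℝ) else 0) = 1 := by
  rw [Finset.sum_eq_single (⟨0, hK⟩ : Fin K)]
  · simp
  · intro b _ hb
    have : (b : ℕ) ≠ 0 := fun h => hb (Fin.ext h)
    simp [this]
  · simp

lemma row_unif (K : ℕ) (hK : 2 ≤ K) :
    ∑ k' : Fin K, (if (k':ℕ) = 0 then (0:ℝ) else ((K:ℝ)-1)⁻¹) = 1 := by
  have hK0 : 0 < K := by omega
  rw [← Finset.add_sum_erase _ _ (Finset.mem_univ (⟨0, hK0⟩ : Fin K))]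
  have h1 : ∀ k' ∈ Finset.univ.erase (⟨0, hK0⟩ : Fin K),
      (if (k':ℕ) = 0 then (0:ℝ) else ((K:ℝ)-1)⁻¹) = ((K:ℝ)-1)⁻¹ := by
    intro k' hk'
    have : (k' : ℕ) ≠ 0 := fun h => (Finset.mem_erase.1 hk').1 (Fin.ext h)
    simp [this]
  rw [Finset.sum_congr rfl h1, Finset.sum_const, Finset.card_erase_of_mem (Finset.mem_univ _),
    Finset.card_univ, Fintype.card_fin]
  have hc : ((K - 1 : ℕ) : ℝ) = (K:ℝ) - 1 := by
    push_cast [Nat.cast_sub (by omega : 1 ≤ K)]; ring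
  have hne : (K:ℝ) - 1 ≠ 0 := by
    have : (2:ℝ) ≤ (K:ℝ) := by exact_mod_cast hK
    linarith
  simp [hc, hne]


lemma welfare_formula (n K : ℕ) (d : Fin K → ℝ) (P : Fin n → Fin K → ℝ)
    (hrow : ∀ i, ∑ k', P i k' = 1) :
    WelfareId n K d P = ∑ k, d k * (1 - ∏ i, (1 - P i k)) := by
  unfold WelfareId
  apply Finset.sum_congr rfl
  intro k _
  rw [sum_jointProb_mul_ind]
  congr 1
  rw [Finset.prod_congr rfl (fun i _ => hrow i), Finset.prod_const_one]
  congr 1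
  apply Finset.prod_congr rfl
  intro i _
  rw [Finset.sum_erase_eq_sub (Finset.mem_univ k), hrow i]

lemma welfare_delta (n K : ℕ) (hn : 1 ≤ n) (hK : 0 < K) :
    WelfareId n K (fun k => if (k : ℕ) = 0 then 1 else 1 / (n : ℝ))
      (fun _ k => if (k : ℕ) = 0 then 1 else 0) = 1 := by
  rw [welfare_formula _ _ _ _ (fun i => row_delta K hK)]
  rw [Finset.sum_eq_single (⟨0, hK⟩ : Fin K)]
  · simp [Finset.prod_const]
    omega
  · intro b _ hb
    have : (b : ℕ) ≠ 0 := fun h => hb (Fin.ext h)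
    simp [this]
  · simp

lemma welfare_mixed (n K : ℕ) (hn : 2 ≤ n) (hK : 2 ≤ K) :
    WelfareId n K (fun k => if (k : ℕ) = 0 then 1 else 1 / (n : ℝ))
      (fun i k => if (i : ℕ) = 0 then (if (k : ℕ) = 0 then 1 else 0)
        else (if (k : ℕ) = 0 then 0 else ((K : ℝ) - 1)⁻¹))
    = 1 + ((K:ℝ) - 1) * ((1/(n:ℝ)) * (1 - (1 - ((K:ℝ)-1)⁻¹) ^ (n-1))) := by
  have hK0 : 0 < K := by omega
  have hn0 : 0 < n := by omega
  set k0 : Fin K := ⟨0, hK0⟩ with hk0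
  set i0 : Fin n := ⟨0, hn0⟩ with hi0
  rw [welfare_formula]
  · rw [← Finset.add_sum_erase _ _ (Finset.mem_univ k0)]
    have hterm0 : (if (k0 : ℕ) = 0 then (1:ℝ) else 1 / (n : ℝ)) *
        (1 - ∏ i : Fin n, (1 - (if (i : ℕ) = 0 then (if (k0 : ℕ) = 0 then (1:ℝ) else 0)
          else (if (k0 : ℕ) = 0 then 0 else ((K : ℝ) - 1)⁻¹)))) = 1 := by
      have h : ∏ i : Fin n, (1 - (if (i : ℕ) = 0 then (1:ℝ) else 0)) = 0 := by
        apply Finset.prod_eq_zero (Finset.mem_univ i0)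
        simp [hi0]
      simp [hk0, h]
    rw [hterm0]
    have hterm : ∀ k ∈ Finset.univ.erase k0,
        (if (k : ℕ) = 0 then (1:ℝ) else 1 / (n : ℝ)) *
        (1 - ∏ i : Fin n, (1 - (if (i : ℕ) = 0 then (if (k : ℕ) = 0 then (1:ℝ) else 0)
          else (if (k : ℕ) = 0 then 0 else ((K : ℝ) - 1)⁻¹))))
        = (1/(n:ℝ)) * (1 - (1 - ((K:ℝ)-1)⁻¹) ^ (n-1)) := by
      intro k hk
      have hkne : (k : ℕ) ≠ 0 := fun h => (Finset.mem_erase.1 hk).1 (Fin.ext h)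
      have hprod : ∏ i : Fin n, (1 - (if (i : ℕ) = 0 then (if (k : ℕ) = 0 then (1:ℝ) else 0)
          else (if (k : ℕ) = 0 then 0 else ((K : ℝ) - 1)⁻¹)))
          = (1 - ((K:ℝ)-1)⁻¹) ^ (n-1) := by
        rw [← Finset.mul_prod_erase _ _ (Finset.mem_univ i0)]
        have h2 : ∀ i ∈ Finset.univ.erase i0,
            (1 - (if (i : ℕ) = 0 then (if (k : ℕ) = 0 then (1:ℝ) else 0)
              else (if (k : ℕ) = 0 then 0 else ((K : ℝ) - 1)⁻¹))) = 1 - ((K:ℝ)-1)⁻¹ := by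
          intro i hi
          have : (i : ℕ) ≠ 0 := fun h => (Finset.mem_erase.1 hi).1 (Fin.ext h)
          simp [this, hkne]
        rw [Finset.prod_congr rfl h2, Finset.prod_const, Finset.card_erase_of_mem
          (Finset.mem_univ _), Finset.card_univ, Fintype.card_fin]
        simp [hi0, hkne]
      rw [hprod]
      simp [hkne]
    rw [Finset.sum_congr rfl hterm, Finset.sum_const, Finset.card_erase_of_mem
      (Finset.mem_univ _), Finset.card_univ, Fintype.card_fin]
    have hc : ((K - 1 : ℕ) : ℝ) = (K:ℝ) - 1 := by
      push_cast [Nat.cast_sub (by omega : 1 ≤ K)]; ring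
    rw [nsmul_eq_mul, hc]
  · intro i
    by_cases hi : (i : ℕ) = 0
    · simpa [hi] using row_delta K hK0
    · simpa [hi] using row_unif K hK

lemma key_ineq (n K : ℕ) (hn : 2 ≤ n) (hK : n ^ 2 < K) :
    2 - 3 / (2 * (n : ℝ)) - 1 / (n : ℝ) ^ 2 ≤
      1 + ((K:ℝ) - 1) * ((1/(n:ℝ)) * (1 - (1 - ((K:ℝ)-1)⁻¹) ^ (n-1))) := by
  have hn2 : (2:ℝ) ≤ (n:ℝ) := by exact_mod_cast hn
  set M : ℝ := (K:ℝ) - 1 with hMdef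
  have hM : (n:ℝ)^2 ≤ M := by
    have : ((n^2 + 1 : ℕ):ℝ) ≤ (K:ℝ) := by exact_mod_cast hK
    push_cast at this
    simp only [hMdef]; linarith
  have hMpos : 0 < M := by nlinarith
  set x : ℝ := M⁻¹ with hxdef
  have hx0 : 0 < x := inv_pos.2 hMpos
  have hxM : M * x = 1 := mul_inv_cancel₀ hMpos.ne'
  have hx1 : x ≤ 1 := by nlinarith
  set S : ℝ := ∑ j ∈ Finset.range (n-1), (1-x)^j with hSdef
  have hgeom : 1 - (1-x)^(n-1) = x * S := by
    have h := mul_geom_sum (1-x) (n-1)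
    simp only [hSdef]
    linear_combination h
  have hb : ∀ j ∈ Finset.range (n-1), 1 - (j:ℝ)*x ≤ (1-x)^j := by
    intro j _
    have h := one_add_mul_le_pow (show (-2:ℝ) ≤ -x by linarith) j
    have e1 : (1:ℝ) + (j:ℝ) * -x = 1 - (j:ℝ)*x := by ring
    have e2 : (1:ℝ) + -x = 1 - x := by ring
    rwa [e1, e2] at h
  have hsum : ∑ j ∈ Finset.range (n-1), (1 - (j:ℝ)*x) ≤ S := Finset.sum_le_sum hb
  have hid : (∑ j ∈ Finset.range (n-1), (j:ℝ)) * 2 = ((n:ℝ)-1) * ((n:ℝ)-2) := by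
    have h2 := Finset.sum_range_id_mul_two (n-1)
    have h3 : ((∑ i ∈ Finset.range (n-1), i) * 2 : ℕ) = ((n-1) * (n-1-1) : ℕ) := h2
    have h4 : (((∑ i ∈ Finset.range (n-1), i) * 2 : ℕ) : ℝ) = (((n-1) * (n-1-1) : ℕ) : ℝ) := by
      exact_mod_cast h3
    push_cast [Nat.cast_sub (by omega : 1 ≤ n), Nat.cast_sub (by omega : 1 ≤ n - 1)] at h4
    push_cast
    linarith [h4]
  have hsum2 : ∑ j ∈ Finset.range (n-1), (1 - (j:ℝ)*x)
      = ((n:ℝ)-1) - x * (((n:ℝ)-1) * ((n:ℝ)-2)) / 2 := by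
    rw [Finset.sum_sub_distrib, Finset.sum_const, Finset.card_range, ← Finset.sum_mul]
    have hc : ((n - 1 : ℕ) : ℝ) = (n:ℝ) - 1 := by
      push_cast [Nat.cast_sub (by omega : 1 ≤ n)]; ring
    have hid2 : (∑ j ∈ Finset.range (n-1), (j:ℝ)) = ((n:ℝ)-1) * ((n:ℝ)-2) / 2 := by
      linarith
    rw [nsmul_eq_mul, hc, hid2]
    ring
  have hxn : x * (n:ℝ)^2 ≤ 1 := by nlinarith
  have hSlb : ((n:ℝ)-1) - x * (((n:ℝ)-1) * ((n:ℝ)-2)) / 2 ≤ S := by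
    rw [← hsum2]; exact hsum
  have hMx : M * ((1/(n:ℝ)) * (x * S)) = S / (n:ℝ) := by
    rw [show M * ((1/(n:ℝ)) * (x * S)) = (M*x) * (S * (1/(n:ℝ))) from by ring, hxM]
    ring
  rw [hgeom, hMx]
  have hSfin : (n:ℝ) - 3/2 ≤ S := by nlinarith
  have hnpos : (0:ℝ) < (n:ℝ) := by linarith
  have h1 : ((n:ℝ) - 3/2)/(n:ℝ) ≤ S/(n:ℝ) := by gcongr
  have h2 : ((n:ℝ) - 3/2)/(n:ℝ) = 1 - 3/(2*(n:ℝ)) := by field_simp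
  have h3 : (0:ℝ) < 1/(n:ℝ)^2 := by positivity
  linarith



lemma congCount_const (n K : ℕ) (hK0 : 0 < K) :
    congCount n K (fun _ => (⟨0, hK0⟩ : Fin K)) ⟨0, hK0⟩ = n := by
  simp [congCount]

lemma nash_delta (n K : ℕ) (hn : 2 ≤ n) (hK0 : 0 < K) :
    IsNashId n K (fun k => if (k : ℕ) = 0 then 1 else 1 / (n : ℝ))
      (fun _ k => if (k : ℕ) = 0 then 1 else 0) := by
  intro i q hq0 hq1
  set k0 : Fin K := ⟨0, hK0⟩ with hk0
  set c0 : Fin n → Fin K := fun _ => k0 with hc0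
  set d : Fin K → ℝ := fun k => if (k : ℕ) = 0 then 1 else 1 / (n : ℝ) with hd
  set P : Fin n → Fin K → ℝ := fun _ k => if (k : ℕ) = 0 then (1:ℝ) else 0 with hP
  -- RHS = 1/n
  have hjp : ∀ ω : Fin n → Fin K, jointProb n K P ω = if ω = c0 then 1 else 0 := by
    intro ω
    by_cases h : ω = c0
    · subst h; simp [jointProb, hP, hc0, hk0]
    · have : ∃ j, ω j ≠ k0 := by
        by_contra hcon
        push_neg at hcon
        exact h (funext fun j => hcon j)
      obtain ⟨j, hj⟩ := this
      have hj' : (ω j : ℕ) ≠ 0 := fun hh => hj (Fin.ext hh)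
      simp only [h, if_false, jointProb]
      exact Finset.prod_eq_zero (Finset.mem_univ j) (by simp [hP, hj'])
  have hRHS : PlayerUtilId n K d i P = 1 / (n:ℝ) := by
    unfold PlayerUtilId
    simp only [hjp, ite_mul, one_mul, zero_mul]
    rw [Finset.sum_ite_eq' Finset.univ c0]
    simp only [Finset.mem_univ, if_true, hc0]
    rw [congCount_const n K hK0]
    simp [hd, hk0]
  -- LHS = 1/n
  have hjp2 : ∀ ω : Fin n → Fin K, jointProb n K (Function.update P i q) ω
      = q (ω i) * ∏ j ∈ Finset.univ.erase i, (if ((ω j : ℕ) = 0) then (1:ℝ) else 0) := by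
    intro ω
    rw [jointProb, ← Finset.mul_prod_erase _ _ (Finset.mem_univ i), Function.update_self]
    congr 1
    apply Finset.prod_congr rfl
    intro j hj
    rw [Function.update_of_ne (Finset.mem_erase.1 hj).1]
  set φ : Fin K → (Fin n → Fin K) := fun k => Function.update c0 i k with hφ
  have hφinj : ∀ x ∈ Finset.univ, ∀ y ∈ Finset.univ, φ x = φ y → x = y := by
    intro x _ y _ hxy
    have := congrFun hxy i
    simpa [hφ] using this
  have hLHS : PlayerUtilId n K d i (Function.update P i q) = 1 / (n:ℝ) := by
    unfold PlayerUtilId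
    rw [← Finset.sum_subset (Finset.subset_univ ((Finset.univ : Finset (Fin K)).image φ))]
    · rw [Finset.sum_image hφinj]
      have hterm : ∀ k : Fin K, jointProb n K (Function.update P i q) (φ k) *
          (d (φ k i) / (congCount n K (φ k) (φ k i) : ℝ)) = q k * (1 / (n:ℝ)) := by
        intro k
        have hki : φ k i = k := by simp [hφ]
        have hprod : ∏ j ∈ Finset.univ.erase i, (if ((φ k j : ℕ) = 0) then (1:ℝ) else 0) = 1 := by
          apply Finset.prod_eq_one
          intro j hj
          have : φ k j = k0 := by
            simp [hφ, Function.update_of_ne (Finset.mem_erase.1 hj).1, hc0]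
          simp [this, hk0]
        rw [hjp2, hki, hprod, mul_one]
        by_cases hk : (k : ℕ) = 0
        · have hkk0 : k = k0 := Fin.ext hk
          have hφc : φ k = c0 := by rw [hkk0]; simp [hφ, hc0]
          have hcc : congCount n K c0 k0 = n := congCount_const n K hK0
          rw [hφc, hkk0, hcc]
          simp [hd, hk0]
        · have hcc : congCount n K (φ k) k = 1 := by
            have : (Finset.univ.filter fun j => φ k j = k) = {i} := by
              ext j
              simp only [Finset.mem_filter, Finset.mem_univ, true_and, Finset.mem_singleton]
              constructor
              · intro hjk
                by_contra hji
                have : φ k j = k0 := by simp [hφ, Function.update_of_ne hji, hc0]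
                rw [this] at hjk
                exact hk (hjk ▸ rfl)
              · intro hji; subst hji; exact hki
            simp [congCount, this]
          rw [hcc]
          simp [hd, hk]
      rw [Finset.sum_congr rfl (fun k _ => hterm k), ← Finset.sum_mul, hq1, one_mul]
    · intro ω _ hω
      have : ∃ j, j ≠ i ∧ ω j ≠ k0 := by
        by_contra hcon
        push_neg at hcon
        apply hω
        refine Finset.mem_image.2 ⟨ω i, Finset.mem_univ _, ?_⟩
        funext j
        by_cases hji : j = i
        · subst hji; simp [hφ]
        · rw [hφ]
          simp only [Function.update_of_ne hji]
          exact (hcon j hji).symm ▸ rfl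
      obtain ⟨j, hji, hjk⟩ := this
      have hj' : (ω j : ℕ) ≠ 0 := fun hh => hjk (Fin.ext hh)
      rw [hjp2]
      have : ∏ j' ∈ Finset.univ.erase i, (if ((ω j' : ℕ) = 0) then (1:ℝ) else 0) = 0 :=
        Finset.prod_eq_zero (Finset.mem_erase.2 ⟨hji, Finset.mem_univ j⟩) (by simp [hj'])
      rw [this]
      ring
  rw [hLHS, hRHS]

theorem stmt19 (n K : ℕ) (hn : 2 ≤ n) (hK : n ^ 2 < K) :
    IsNashId n K (fun k => if (k : ℕ) = 0 then 1 else 1 / (n : ℝ))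
      (fun _ k => if (k : ℕ) = 0 then 1 else 0) ∧
    WelfareId n K (fun k => if (k : ℕ) = 0 then 1 else 1 / (n : ℝ))
      (fun _ k => if (k : ℕ) = 0 then 1 else 0) = 1 ∧
    2 - 3 / (2 * (n : ℝ)) - 1 / (n : ℝ) ^ 2 ≤
      WelfareId n K (fun k => if (k : ℕ) = 0 then 1 else 1 / (n : ℝ))
        (fun i k => if (i : ℕ) = 0 then (if (k : ℕ) = 0 then 1 else 0)
          else (if (k : ℕ) = 0 then 0 else ((K : ℝ) - 1)⁻¹)) := by
  have hK2 : 2 ≤ K := by nlinarith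
  refine ⟨nash_delta n K hn (by omega), welfare_delta n K (by omega) (by omega), ?_⟩
  rw [welfare_mixed n K hn hK2]
  exact key_ineq n K hn hK
end
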